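/- Every linear subspace U ⊆ ℝ^{d+1} that is B-invariant (B·U ⊆ U) and contained in the span of the standard basis vectors e₂,…,e_{d−1} (i.e. contained in {x ∈ ℝ^{d+1} : x₁ = x_d = x_{d+1} = 0}) is the zero subspace. -/

import Mathlib

/-!
The sign matrix `M` (entries `sign (j - i)`) is the Cayley transform of the negacyclic shift
`P z = (z₂, …, zₙ, -z₁)`: row `i + 1` of `M + 1` is row `i` of `M - 1`, and row `n` of `M - 1`
is minus row `1` of `M + 1`, i.e. `P (M + 1) = M - 1`. Hence `ker (M + 1) ⊆ ker (M - 1)`, so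
`M + 1` is injective when `2 ≠ 0`, and a subspace `S` stable under `M` is stable under
`P = (M - 1)(M + 1)⁻¹`. If moreover `z₁ = 0` on `S`, then `P` acts on `S` as the plain shift,
which brings every coordinate into first position, so `S = 0`.
On vectors whose last two coordinates vanish, `B` acts on the first block as `-a • M`.
-/

open Matrix

def signMatrix (K : Type*) [Ring K] (n : ℕ) : Matrix (Fin n) (Fin n) K :=
  of fun i j => if i < j then 1 else if j < i then -1 else 0

section Ring

variable {K : Type*} [Ring K] {n : ℕ}

theorem signMatrix_add_one_apply (i j : Fin n) :
    (signMatrix K n + 1) i j = if i ≤ j then 1 else -1 := by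
  rcases lt_trichotomy i j with h | rfl | h
  · simp [signMatrix, one_apply, h, h.le, h.ne]
  · simp [signMatrix]
  · simp [signMatrix, one_apply, h, h.ne', not_le.mpr h, not_lt.mpr h.le]

theorem signMatrix_sub_one_apply (i j : Fin n) :
    (signMatrix K n - 1) i j = if i < j then 1 else -1 := by
  rcases lt_trichotomy i j with h | rfl | h
  · simp [signMatrix, one_apply, h, h.ne]
  · simp [signMatrix]
  · simp [signMatrix, one_apply, h, h.ne', not_lt.mpr h.le]

theorem signMatrix_add_one_mulVec_succ (z : Fin (n + 1) → K) (i : Fin n) :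
    ((signMatrix K (n + 1) + 1) *ᵥ z) i.succ = ((signMatrix K (n + 1) - 1) *ᵥ z) i.castSucc := by
  show (fun j => _) ⬝ᵥ z = (fun j => _) ⬝ᵥ z
  congr 1
  funext j
  simp only [signMatrix_add_one_apply, signMatrix_sub_one_apply, Fin.castSucc_lt_iff_succ_le]

theorem signMatrix_sub_one_mulVec_last (z : Fin (n + 1) → K) :
    ((signMatrix K (n + 1) - 1) *ᵥ z) (Fin.last n) = -((signMatrix K (n + 1) + 1) *ᵥ z) 0 := by
  show (fun j => _) ⬝ᵥ z = -((fun j => _) ⬝ᵥ z)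
  rw [← neg_dotProduct]
  congr 1
  funext j
  simp only [Pi.neg_apply, signMatrix_add_one_apply, signMatrix_sub_one_apply,
    if_pos (Fin.zero_le j), if_neg (not_lt.mpr (Fin.le_last j))]

end Ring

section Field

variable {K : Type*} [Field K] [NeZero (2 : K)] {n : ℕ}

theorem signMatrix_add_one_mulVec_injective :
    Function.Injective (signMatrix K (n + 1) + 1).mulVec := by
  rw [← coe_mulVecLin, ← LinearMap.ker_eq_bot, LinearMap.ker_eq_bot']
  intro z hz
  rw [coe_mulVecLin] at hz
  have hsub : (signMatrix K (n + 1) - 1) *ᵥ z = 0 := by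
    funext i
    induction i using Fin.lastCases with
    | last => rw [signMatrix_sub_one_mulVec_last, hz]; simp
    | cast i => rw [← signMatrix_add_one_mulVec_succ, hz]; rfl
  have htwo : (2 : K) • z = 0 := by
    calc (2 : K) • z = (signMatrix K (n + 1) + 1) *ᵥ z - (signMatrix K (n + 1) - 1) *ᵥ z := by
          rw [add_mulVec, sub_mulVec, one_mulVec]; module
      _ = 0 := by rw [hz, hsub, sub_zero]
  exact (smul_eq_zero.mp htwo).resolve_left two_ne_zero

end Field

theorem Submodule.eq_bot_of_apply_zero_of_exists_shift {R : Type*} [Semiring R] {n : ℕ}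
    (S : Submodule R (Fin (n + 1) → R))
    (h0 : ∀ u ∈ S, u 0 = 0) (hshift : ∀ u ∈ S, ∃ v ∈ S, ∀ i : Fin n, v i.castSucc = u i.succ) :
    S = ⊥ := by
  have hcoord : ∀ i : Fin (n + 1), ∀ u ∈ S, u i = 0 := by
    intro i
    induction i using Fin.induction with
    | zero => exact h0
    | succ i ih =>
      intro u hu
      obtain ⟨v, hv, hvu⟩ := hshift u hu
      rw [← hvu, ih v hv]
  exact (Submodule.eq_bot_iff S).mpr fun u hu => funext fun i => hcoord i u hu

section Invariant

variable {K : Type*} [Field K] [NeZero (2 : K)] {n : ℕ} (S : Submodule K (Fin (n + 1) → K))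

theorem exists_shift_mem_of_signMatrix_mulVec_mem (hS : ∀ z ∈ S, signMatrix K (n + 1) *ᵥ z ∈ S)
    (u : Fin (n + 1) → K) (hu : u ∈ S) : ∃ v ∈ S, ∀ i : Fin n, v i.castSucc = u i.succ := by
  have hplus : ∀ z ∈ S, (signMatrix K (n + 1) + 1) *ᵥ z ∈ S := fun z hz => by
    rw [add_mulVec, one_mulVec]; exact S.add_mem (hS z hz) hz
  have hsurj : Function.Surjective ((mulVecLin (signMatrix K (n + 1) + 1)).restrict hplus) :=
    LinearMap.injective_iff_surjective.mp fun x y hxy =>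
      Subtype.ext (signMatrix_add_one_mulVec_injective (congrArg Subtype.val hxy))
  obtain ⟨⟨z, hz⟩, hzu⟩ := hsurj ⟨u, hu⟩
  refine ⟨(signMatrix K (n + 1) - 1) *ᵥ z, ?_, fun i => ?_⟩
  · rw [sub_mulVec, one_mulVec]; exact S.sub_mem (hS z hz) hz
  · rw [← signMatrix_add_one_mulVec_succ]; exact congrFun (congrArg Subtype.val hzu) i.succ

theorem eq_bot_of_signMatrix_mulVec_mem (hS : ∀ z ∈ S, signMatrix K (n + 1) *ᵥ z ∈ S)
    (h0 : ∀ u ∈ S, u 0 = 0) : S = ⊥ :=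
  S.eq_bot_of_apply_zero_of_exists_shift h0 (exists_shift_mem_of_signMatrix_mulVec_mem S hS)

end Invariant

theorem fromBlocks_fromBlocks_mulVec_comp_inl_inl {l m o R : Type*} [Fintype l] [Fintype m]
    [Fintype o] [NonUnitalNonAssocSemiring R] (A : Matrix l l R) (B₁ : Matrix l m R)
    (C₁ : Matrix m l R) (D₁ : Matrix m m R) (B : Matrix (l ⊕ m) o R) (C : Matrix o (l ⊕ m) R)
    (D : Matrix o o R) (x : (l ⊕ m) ⊕ o → R) (h₁ : (x ∘ Sum.inl) ∘ Sum.inr = 0)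
    (h₂ : x ∘ Sum.inr = 0) :
    (fromBlocks (fromBlocks A B₁ C₁ D₁) B C D *ᵥ x) ∘ Sum.inl ∘ Sum.inl =
      A *ᵥ (x ∘ Sum.inl ∘ Sum.inl) := by
  simp only [fromBlocks_mulVec, h₁, h₂, mulVec_zero, add_zero, ← Function.comp_assoc,
    Sum.elim_comp_inl]

/-- Let `B` be the `(d+1)×(d+1)` matrix of the Nomizu operator `∇𝐀`, with block form
`[[−a·M_{d−1}, −a·e₁, 0], [a·e₁ᵀ, 0, 0], [0, 0, 0]]`.  Every `B`-invariant linear subspace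
contained in the span of `e₂, …, e_{d−1}` (i.e. where the first, `d`-th and `(d+1)`-th
coordinates vanish) is the zero subspace. -/
theorem stmt14 (d : ℕ) (hd : 3 ≤ d) (a : ℝ) (ha : a ≠ 0)
    (M' : Matrix (Fin (d - 1)) (Fin (d - 1)) ℝ)
    (hM' : ∀ i j : Fin (d - 1), M' i j = if i < j then 1 else if j < i then -1 else 0)
    (B : Matrix ((Fin (d - 1) ⊕ Unit) ⊕ Unit) ((Fin (d - 1) ⊕ Unit) ⊕ Unit) ℝ)
    (hB : B = fromBlocks
      (fromBlocks (-(a • M'))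
        (-(a • Matrix.replicateCol Unit (Pi.single (⟨0, by omega⟩ : Fin (d - 1)) 1)))
        (a • Matrix.replicateRow Unit (Pi.single (⟨0, by omega⟩ : Fin (d - 1)) 1))
        (0 : Matrix Unit Unit ℝ))
      0 0 (0 : Matrix Unit Unit ℝ))
    (U : Submodule ℝ (((Fin (d - 1) ⊕ Unit) ⊕ Unit) → ℝ))
    (hinv : ∀ x ∈ U, B.mulVec x ∈ U)
    (hsub : ∀ x ∈ U, x (Sum.inl (Sum.inl (⟨0, by omega⟩ : Fin (d - 1)))) = 0 ∧
      x (Sum.inl (Sum.inr ())) = 0 ∧ x (Sum.inr ()) = 0) :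
    U = ⊥ := by
  obtain ⟨n, rfl⟩ : ∃ n, d = n + 2 := ⟨d - 2, by omega⟩
  have hM : M' = signMatrix ℝ (n + 1) := Matrix.ext hM'
  subst hM
  let ι : Fin (n + 1) → (Fin (n + 1) ⊕ Unit) ⊕ Unit := Sum.inl ∘ Sum.inl
  have hrestrict : ∀ x ∈ U, (-a)⁻¹ • ((B *ᵥ x) ∘ ι) = signMatrix ℝ (n + 1) *ᵥ (x ∘ ι) := by
    intro x hx
    obtain ⟨-, hx₁, hx₂⟩ := hsub x hx
    rw [hB, fromBlocks_fromBlocks_mulVec_comp_inl_inl _ _ _ _ _ _ _ x (funext fun _ => hx₁)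
      (funext fun _ => hx₂), neg_mulVec, smul_mulVec, ← neg_smul, smul_smul,
      inv_mul_cancel₀ (neg_ne_zero.mpr ha), one_smul]
  let S := U.map (LinearMap.funLeft ℝ ℝ ι)
  have hS : S = ⊥ := by
    refine eq_bot_of_signMatrix_mulVec_mem S ?_ ?_
    · rintro _ ⟨x, hx, rfl⟩
      exact ⟨(-a)⁻¹ • (B *ᵥ x), U.smul_mem _ (hinv x hx), hrestrict x hx⟩
    · rintro _ ⟨x, hx, rfl⟩
      exact (hsub x hx).1
  refine (Submodule.eq_bot_iff U).mpr fun x hx => ?_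
  have hxι : x ∘ ι = 0 := (Submodule.eq_bot_iff S).mp hS _ ⟨x, hx, rfl⟩
  obtain ⟨-, hx₁, hx₂⟩ := hsub x hx
  funext j
  rcases j with (i | ⟨⟩) | ⟨⟩
  exacts [congrFun hxι i, hx₁, hx₂]
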